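/- In the boundary-field setting: the angle function satisfies ∂_r θ(0) = ζ cos θ₁ − α sin θ₁ and ∂_s θ(0) = γ cos θ₁ − β sin θ₁. Moreover, if 0 is a critical point of β̂, i.e. ∂_r β̂(0) = ∂_s β̂(0) = 0, then C(θ₁) α + S(θ₁) ζ = 0 and C(θ₁) β + S(θ₁) γ = 0; in particular, if S(θ₁) ≠ 0 then ζ = T(θ₁) α and γ = T(θ₁) β with T(θ₁) = −C(θ₁)/S(θ₁). -/

import Mathlib

open Real Set

noncomputable section

/-- Partial derivative with respect to the first variable. -/
def pd1 (u : ℝ → ℝ → ℝ) : ℝ → ℝ → ℝ := fun r s => deriv (fun x => u x s) r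

/-- Partial derivative with respect to the second variable. -/
def pd2 (u : ℝ → ℝ → ℝ) : ℝ → ℝ → ℝ := fun r s => deriv (fun y => u r y) s

/-- The pointwise norm of the field `b = (b₁, b₂, b₃)`. -/
def nrmb (b1 b2 b3 : ℝ → ℝ → ℝ) : ℝ → ℝ → ℝ :=
  fun r s => Real.sqrt ((b1 r s)^2 + (b2 r s)^2 + (b3 r s)^2)

/-- The angle function `θ(r,s) ∈ (0, π/2)` defined by `sin θ(r,s) = b₃(r,s)/‖b(r,s)‖`. -/
def angleFun (b1 b2 b3 : ℝ → ℝ → ℝ) : ℝ → ℝ → ℝ :=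
  fun r s => Real.arcsin (b3 r s / nrmb b1 b2 b3 r s)

/-- The function `β̂(r,s) = σ(θ(r,s)) ‖b(r,s)‖`. -/
def betaHat (σ : ℝ → ℝ) (b1 b2 b3 : ℝ → ℝ → ℝ) : ℝ → ℝ → ℝ :=
  fun r s => σ (angleFun b1 b2 b3 r s) * nrmb b1 b2 b3 r s

/-- The boundary-field setting: `θ₁ ∈ (0, π/2)`, `σ` is `C²` on `(0, π/2)`,
`b = (b₁,b₂,b₃)` is a smooth vector field on an open neighbourhood `U` of `0 ∈ ℝ²` with
`b(0) = (0, cos θ₁, sin θ₁)` and `b₃/‖b‖ ∈ (0,1)` on `U`. -/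
structure BoundaryFieldSetting (θ₁ : ℝ) (σ : ℝ → ℝ) (U : Set (ℝ × ℝ))
    (b1 b2 b3 : ℝ → ℝ → ℝ) : Prop where
  theta_mem : θ₁ ∈ Set.Ioo 0 (π/2)
  sigma_C2 : ContDiffOn ℝ 2 σ (Set.Ioo 0 (π/2))
  U_open : IsOpen U
  zero_mem : (0, 0) ∈ U
  b1_smooth : ∀ n : ℕ, ContDiffOn ℝ n (fun p : ℝ × ℝ => b1 p.1 p.2) U
  b2_smooth : ∀ n : ℕ, ContDiffOn ℝ n (fun p : ℝ × ℝ => b2 p.1 p.2) U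
  b3_smooth : ∀ n : ℕ, ContDiffOn ℝ n (fun p : ℝ × ℝ => b3 p.1 p.2) U
  b1_zero : b1 0 0 = 0
  b2_zero : b2 0 0 = Real.cos θ₁
  b3_zero : b3 0 0 = Real.sin θ₁
  ratio_mem : ∀ p ∈ U, b3 p.1 p.2 / nrmb b1 b2 b3 p.1 p.2 ∈ Set.Ioo (0:ℝ) 1

/-!
Differentiating `sin θ = b₃/‖b‖` and `β̂ = σ(θ) ‖b‖` along a coordinate line through `0`, where
`b = (0, cos θ₁, sin θ₁)` is a unit vector, gives `∂θ = ∂b₃ cos θ₁ − ∂b₂ sin θ₁` and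
`∂‖b‖ = ∂b₂ cos θ₁ + ∂b₃ sin θ₁`; the product rule then turns `∂β̂` into `C(θ₁) ∂b₂ + S(θ₁) ∂b₃`.
-/

section Curve

variable {c1 c2 c3 : ℝ → ℝ} {d a z t θ : ℝ}

lemma sqrt_sum_sq_eq_one (v1 : c1 t = 0) (v2 : c2 t = cos θ) (v3 : c3 t = sin θ) :
    √(c1 t ^ 2 + c2 t ^ 2 + c3 t ^ 2) = 1 := by
  rw [v1, v2, v3, zero_pow two_ne_zero, zero_add, cos_sq_add_sin_sq, sqrt_one]

lemma hasDerivAt_sqrt_sum_sq (h1 : HasDerivAt c1 d t) (h2 : HasDerivAt c2 a t)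
    (h3 : HasDerivAt c3 z t) (v1 : c1 t = 0) (v2 : c2 t = cos θ) (v3 : c3 t = sin θ) :
    HasDerivAt (fun x => √(c1 x ^ 2 + c2 x ^ 2 + c3 x ^ 2)) (a * cos θ + z * sin θ) t := by
  have hnorm := sqrt_sum_sq_eq_one v1 v2 v3
  have hsum : c1 t ^ 2 + c2 t ^ 2 + c3 t ^ 2 ≠ 0 := by
    intro h0
    rw [h0, sqrt_zero] at hnorm
    exact zero_ne_one hnorm
  have hsq : HasDerivAt (fun x => c1 x ^ 2 + c2 x ^ 2 + c3 x ^ 2)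
      (2 * c1 t * d + 2 * c2 t * a + 2 * c3 t * z) t := by
    refine (((h1.pow 2).add (h2.pow 2)).add (h3.pow 2)).congr_deriv ?_
    push_cast
    ring
  refine (hsq.sqrt hsum).congr_deriv ?_
  rw [hnorm, v1, v2, v3]
  ring

lemma hasDerivAt_arcsin_div_sqrt_sum_sq (hθ : θ ∈ Ioo (-(π / 2)) (π / 2))
    (h1 : HasDerivAt c1 d t) (h2 : HasDerivAt c2 a t) (h3 : HasDerivAt c3 z t)
    (v1 : c1 t = 0) (v2 : c2 t = cos θ) (v3 : c3 t = sin θ) :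
    HasDerivAt (fun x => arcsin (c3 x / √(c1 x ^ 2 + c2 x ^ 2 + c3 x ^ 2)))
      (z * cos θ - a * sin θ) t := by
  have hcos : 0 < cos θ := cos_pos_of_mem_Ioo hθ
  have hsin : sin θ ∈ Ioo (-1) 1 :=
    ⟨by nlinarith [sin_sq_add_cos_sq θ], by nlinarith [sin_sq_add_cos_sq θ]⟩
  have hratio : c3 t / √(c1 t ^ 2 + c2 t ^ 2 + c3 t ^ 2) = sin θ := by
    rw [sqrt_sum_sq_eq_one v1 v2 v3, v3, div_one]
  have hquot : HasDerivAt (fun x => c3 x / √(c1 x ^ 2 + c2 x ^ 2 + c3 x ^ 2))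
      (z - sin θ * (a * cos θ + z * sin θ)) t := by
    refine (h3.div (hasDerivAt_sqrt_sum_sq h1 h2 h3 v1 v2 v3)
      (by rw [sqrt_sum_sq_eq_one v1 v2 v3]; exact one_ne_zero)).congr_deriv ?_
    rw [sqrt_sum_sq_eq_one v1 v2 v3, v3]
    ring
  have harcsin := hasDerivAt_arcsin (x := sin θ) hsin.1.ne' hsin.2.ne
  rw [← hratio] at harcsin
  refine (harcsin.comp t hquot).congr_deriv ?_
  rw [hratio, ← cos_sq', sqrt_sq hcos.le]
  field_simp
  linear_combination -z * sin_sq_add_cos_sq θ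

lemma hasDerivAt_comp_arcsin_div_sqrt_sum_sq_mul {σ : ℝ → ℝ} {σ' : ℝ}
    (hθ : θ ∈ Ioo (-(π / 2)) (π / 2)) (hσ : HasDerivAt σ σ' θ)
    (h1 : HasDerivAt c1 d t) (h2 : HasDerivAt c2 a t) (h3 : HasDerivAt c3 z t)
    (v1 : c1 t = 0) (v2 : c2 t = cos θ) (v3 : c3 t = sin θ) :
    HasDerivAt
      (fun x => σ (arcsin (c3 x / √(c1 x ^ 2 + c2 x ^ 2 + c3 x ^ 2))) *
        √(c1 x ^ 2 + c2 x ^ 2 + c3 x ^ 2))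
      ((cos θ * σ θ - sin θ * σ') * a + (sin θ * σ θ + cos θ * σ') * z) t := by
  have hangle : arcsin (c3 t / √(c1 t ^ 2 + c2 t ^ 2 + c3 t ^ 2)) = θ := by
    rw [sqrt_sum_sq_eq_one v1 v2 v3, v3, div_one, arcsin_sin hθ.1.le hθ.2.le]
  rw [← hangle] at hσ
  refine ((hσ.comp t (hasDerivAt_arcsin_div_sqrt_sum_sq hθ h1 h2 h3 v1 v2 v3)).mul
    (hasDerivAt_sqrt_sum_sq h1 h2 h3 v1 v2 v3)).congr_deriv ?_
  rw [Function.comp_apply, hangle, sqrt_sum_sq_eq_one v1 v2 v3]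
  ring

end Curve

section FirstVariable

variable {b1 b2 b3 : ℝ → ℝ → ℝ} {r s θ : ℝ}

lemma pd1_angleFun (hθ : θ ∈ Ioo (-(π / 2)) (π / 2))
    (h1 : DifferentiableAt ℝ (fun x => b1 x s) r) (h2 : DifferentiableAt ℝ (fun x => b2 x s) r)
    (h3 : DifferentiableAt ℝ (fun x => b3 x s) r)
    (v1 : b1 r s = 0) (v2 : b2 r s = cos θ) (v3 : b3 r s = sin θ) :
    pd1 (angleFun b1 b2 b3) r s = pd1 b3 r s * cos θ - pd1 b2 r s * sin θ :=
  (hasDerivAt_arcsin_div_sqrt_sum_sq hθ h1.hasDerivAt h2.hasDerivAt h3.hasDerivAt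
    v1 v2 v3).deriv

lemma pd1_betaHat {σ : ℝ → ℝ} (hθ : θ ∈ Ioo (-(π / 2)) (π / 2))
    (hσ : DifferentiableAt ℝ σ θ)
    (h1 : DifferentiableAt ℝ (fun x => b1 x s) r) (h2 : DifferentiableAt ℝ (fun x => b2 x s) r)
    (h3 : DifferentiableAt ℝ (fun x => b3 x s) r)
    (v1 : b1 r s = 0) (v2 : b2 r s = cos θ) (v3 : b3 r s = sin θ) :
    pd1 (betaHat σ b1 b2 b3) r s =
      (cos θ * σ θ - sin θ * deriv σ θ) * pd1 b2 r s +
        (sin θ * σ θ + cos θ * deriv σ θ) * pd1 b3 r s :=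
  (hasDerivAt_comp_arcsin_div_sqrt_sum_sq_mul hθ hσ.hasDerivAt h1.hasDerivAt h2.hasDerivAt
    h3.hasDerivAt v1 v2 v3).deriv

end FirstVariable

lemma differentiableAt_left_slice {f : ℝ → ℝ → ℝ} {r s : ℝ}
    (hf : DifferentiableAt ℝ (fun p : ℝ × ℝ => f p.1 p.2) (r, s)) :
    DifferentiableAt ℝ (fun x => f x s) r :=
  hf.comp (f := fun x => (x, s)) r (differentiableAt_id.prodMk (differentiableAt_const s))

lemma differentiableAt_right_slice {f : ℝ → ℝ → ℝ} {r s : ℝ}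
    (hf : DifferentiableAt ℝ (fun p : ℝ × ℝ => f p.1 p.2) (r, s)) :
    DifferentiableAt ℝ (fun y => f r y) s :=
  hf.comp (f := fun y => (r, y)) s ((differentiableAt_const r).prodMk differentiableAt_id)

lemma eq_neg_div_mul_of_mul_add_mul_eq_zero {K : Type*} [Field K] {c σ a z : K} (hσ : σ ≠ 0)
    (h : c * a + σ * z = 0) : z = -c / σ * a := by
  field_simp
  linear_combination h

namespace BoundaryFieldSetting

variable {θ₁ : ℝ} {σ : ℝ → ℝ} {U : Set (ℝ × ℝ)} {b1 b2 b3 : ℝ → ℝ → ℝ}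

lemma theta_mem_Ioo_neg (H : BoundaryFieldSetting θ₁ σ U b1 b2 b3) :
    θ₁ ∈ Ioo (-(π / 2)) (π / 2) :=
  ⟨by linarith [H.theta_mem.1, pi_pos], H.theta_mem.2⟩

lemma differentiableAt_sigma (H : BoundaryFieldSetting θ₁ σ U b1 b2 b3) :
    DifferentiableAt ℝ σ θ₁ :=
  (H.sigma_C2.differentiableOn two_ne_zero).differentiableAt (isOpen_Ioo.mem_nhds H.theta_mem)

lemma differentiableAt_of_smooth (H : BoundaryFieldSetting θ₁ σ U b1 b2 b3) {f : ℝ → ℝ → ℝ}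
    (hf : ∀ n : ℕ, ContDiffOn ℝ n (fun p : ℝ × ℝ => f p.1 p.2) U) :
    DifferentiableAt ℝ (fun p : ℝ × ℝ => f p.1 p.2) (0, 0) :=
  ((hf 1).differentiableOn one_ne_zero).differentiableAt (H.U_open.mem_nhds H.zero_mem)

end BoundaryFieldSetting

/-- Critical point relations: the first derivatives of the angle function at `0`, and,
if `0` is a critical point of `β̂`, the relations `C(θ₁)α + S(θ₁)ζ = 0`,
`C(θ₁)β + S(θ₁)γ = 0`, and (if `S(θ₁) ≠ 0`) `ζ = T(θ₁)α`, `γ = T(θ₁)β`. -/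
theorem critical_point_relations (θ₁ : ℝ) (σ : ℝ → ℝ) (U : Set (ℝ × ℝ))
    (b1 b2 b3 : ℝ → ℝ → ℝ) (H : BoundaryFieldSetting θ₁ σ U b1 b2 b3)
    (al be ze ga : ℝ)
    (hal : al = pd1 b2 0 0) (hbe : be = pd2 b2 0 0)
    (hze : ze = pd1 b3 0 0) (hga : ga = pd2 b3 0 0)
    (Cθ Sθ : ℝ)
    (hC : Cθ = Real.cos θ₁ * σ θ₁ - Real.sin θ₁ * deriv σ θ₁)
    (hS : Sθ = Real.sin θ₁ * σ θ₁ + Real.cos θ₁ * deriv σ θ₁) :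
    pd1 (angleFun b1 b2 b3) 0 0 = ze * Real.cos θ₁ - al * Real.sin θ₁ ∧
    pd2 (angleFun b1 b2 b3) 0 0 = ga * Real.cos θ₁ - be * Real.sin θ₁ ∧
    (pd1 (betaHat σ b1 b2 b3) 0 0 = 0 → pd2 (betaHat σ b1 b2 b3) 0 0 = 0 →
      (Cθ * al + Sθ * ze = 0 ∧ Cθ * be + Sθ * ga = 0 ∧
        (Sθ ≠ 0 → ze = (- Cθ / Sθ) * al ∧ ga = (- Cθ / Sθ) * be))) := by
  subst hal hbe hze hga hC hS
  have hθ := H.theta_mem_Ioo_neg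
  have d1 := H.differentiableAt_of_smooth H.b1_smooth
  have d2 := H.differentiableAt_of_smooth H.b2_smooth
  have d3 := H.differentiableAt_of_smooth H.b3_smooth
  have r1 := differentiableAt_left_slice d1
  have r2 := differentiableAt_left_slice d2
  have r3 := differentiableAt_left_slice d3
  have s1 := differentiableAt_right_slice d1
  have s2 := differentiableAt_right_slice d2
  have s3 := differentiableAt_right_slice d3
  -- `pd2 u r s` is `pd1 (flip u) s r`, and `angleFun`, `betaHat` commute with `flip`.
  refine ⟨pd1_angleFun hθ r1 r2 r3 H.b1_zero H.b2_zero H.b3_zero,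
    pd1_angleFun (b1 := flip b1) (b2 := flip b2) (b3 := flip b3) hθ s1 s2 s3
      H.b1_zero H.b2_zero H.b3_zero, fun hr hs => ?_⟩
  have r_rel := (pd1_betaHat hθ H.differentiableAt_sigma r1 r2 r3
    H.b1_zero H.b2_zero H.b3_zero).symm.trans hr
  have s_rel := (pd1_betaHat (b1 := flip b1) (b2 := flip b2) (b3 := flip b3) hθ
    H.differentiableAt_sigma s1 s2 s3 H.b1_zero H.b2_zero H.b3_zero).symm.trans hs
  exact ⟨r_rel, s_rel, fun hS => ⟨eq_neg_div_mul_of_mul_add_mul_eq_zero hS r_rel,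
    eq_neg_div_mul_of_mul_add_mul_eq_zero hS s_rel⟩⟩
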